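/- arXiv:1807.05779 — 9 statements merged into one kernel-verified Lean document; each statement's English description precedes it below -/
import Mathlib

section
/- Given a system objective function φ : S → ℝ and neighbor sets U(i) with N_i = U(i) ∪ {i}, there exist local information based utility functions c_i (each c_i(x) depending only on the coordinates x_j with j ∈ N_i) such that the resulting game is a potential game with potential function φ, if and only if for every player i there exist functions u_i : ∏_{j∈N_i} S_j → ℝ and d_i : ∏_{j≠i} S_j → ℝ such that φ(x) = u_i(x_{N_i}) - d_i(x^{-i}) for all x ∈ S, where x_{N_i} denotes the restriction of x to the coordinates in N_i. -/
/-- Given a system objective function `φ` and neighbor sets `U i`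
(with `i ∉ U i` and `N_i = insert i (U i)`), there exist local information based utility
functions `c i` (each depending only on the coordinates in `N_i`) such that the resulting
game is a potential game with potential function `φ`, if and only if for every player `i`
there exist functions `u_i : ∏_{j ∈ N_i} S j → ℝ` and `d_i : ∏_{j ≠ i} S j → ℝ` with
`φ x = u_i (x_{N_i}) - d_i (x^{-i})` for all profiles `x`. -/
theorem local_utility_design_iff_decomposition
    {n : ℕ} {S : Fin n → Type*} [∀ i, Fintype (S i)] [∀ i, Nonempty (S i)]
    (U : Fin n → Finset (Fin n)) (hU : ∀ i, i ∉ U i)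
    (φ : ((j : Fin n) → S j) → ℝ) :
    (∃ c : Fin n → ((j : Fin n) → S j) → ℝ,
      (∀ (i : Fin n) (x y : (j : Fin n) → S j),
          (∀ j ∈ insert i (U i), x j = y j) → c i x = c i y) ∧
      (∀ (i : Fin n) (s : (j : Fin n) → S j) (a b : S i),
          c i (Function.update s i a) - c i (Function.update s i b) =
            φ (Function.update s i a) - φ (Function.update s i b))) ↔
      ∀ i : Fin n,
        ∃ (u : ((j : {j : Fin n // j ∈ insert i (U i)}) → S j.1) → ℝ)
          (d : ((j : {j : Fin n // j ≠ i}) → S j.1) → ℝ),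
          ∀ x : (j : Fin n) → S j,
            φ x = u (fun j => x j.1) - d (fun j => x j.1) := by
  constructor
  · rintro ⟨c, hloc, hpot⟩ i
    refine ⟨fun z => c i (fun j => if h : j ∈ insert i (U i) then z ⟨j, h⟩
              else Classical.arbitrary (S j)),
            fun w => c i (fun j => if h : j ≠ i then w ⟨j, h⟩ else Classical.arbitrary (S j))
                   - φ (fun j => if h : j ≠ i then w ⟨j, h⟩ else Classical.arbitrary (S j)),
            ?_⟩
    intro x
    have h1 : c i (fun j => if h : j ∈ insert i (U i) then x j else Classical.arbitrary (S j))
        = c i x := by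
      apply hloc
      intro j hj
      simp [hj]
    have hy : (fun j => if h : j ≠ i then x j else Classical.arbitrary (S j))
        = Function.update x i (Classical.arbitrary (S i)) := by
      funext j
      by_cases h : j = i
      · subst h; simp
      · simp [h, Function.update_of_ne h]
    have h2 := hpot i x (Classical.arbitrary (S i)) (x i)
    rw [Function.update_eq_self] at h2
    simp only [h1, hy]
    linarith
  · intro h
    choose u d hud using h
    refine ⟨fun i x => u i (fun j => x j.1), ?_, ?_⟩
    · intro i x y hxy
      exact congrArg (u i) (funext fun j => hxy j.1 j.2)
    · intro i s a b
      have ha := hud i (Function.update s i a)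
      have hb := hud i (Function.update s i b)
      have hd : (fun j : {j : Fin n // j ≠ i} => Function.update s i a j.1)
          = (fun j : {j : Fin n // j ≠ i} => Function.update s i b j.1) := by
        funext j
        rw [Function.update_of_ne j.2, Function.update_of_ne j.2]
      rw [ha, hb, hd]
      ring
end

section
/- Suppose that for every player i there exist functions u_i : ∏_{j∈N_i} S_j → ℝ and d_i : ∏_{j≠i} S_j → ℝ such that φ(x) = u_i(x_{N_i}) - d_i(x^{-i}) for all x ∈ S. Then the game whose utility functions are c_i(x) = u_i(x_{N_i}) is a potential game with potential function φ, and each utility function c_i is local information based. -/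
/-- Suppose that for every player `i` there are functions
`u i : ∏_{j ∈ N_i} S j → ℝ` and `d i : ∏_{j ≠ i} S j → ℝ` such that
`φ x = u i (x_{N_i}) - d i (x^{-i})` for all profiles `x` (where `N_i = insert i (U i)`,
`i ∉ U i`). Then the game with utility functions `c i x = u i (x_{N_i})` is a potential
game with potential function `φ`, and each `c i` is local information based (it depends
only on the coordinates in `N_i`). -/
theorem decomposition_gives_local_potential_game
    {n : ℕ} {S : Fin n → Type*} [∀ i, Fintype (S i)] [∀ i, Nonempty (S i)]
    (U : Fin n → Finset (Fin n)) (hU : ∀ i, i ∉ U i)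
    (φ : ((j : Fin n) → S j) → ℝ)
    (u : (i : Fin n) → (((j : {j : Fin n // j ∈ insert i (U i)}) → S j.1) → ℝ))
    (d : (i : Fin n) → (((j : {j : Fin n // j ≠ i}) → S j.1) → ℝ))
    (h : ∀ (i : Fin n) (x : (j : Fin n) → S j),
        φ x = u i (fun j => x j.1) - d i (fun j => x j.1)) :
    (∀ (i : Fin n) (x y : (j : Fin n) → S j),
        (∀ j ∈ insert i (U i), x j = y j) →
          u i (fun j => x j.1) = u i (fun j => y j.1)) ∧
    (∀ (i : Fin n) (s : (j : Fin n) → S j) (a b : S i),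
        u i (fun j => Function.update s i a j.1) -
            u i (fun j => Function.update s i b j.1) =
          φ (Function.update s i a) - φ (Function.update s i b)) := by
  constructor
  · intro i x y hxy
    congr 1
    funext j
    exact hxy j.1 j.2
  · intro i s a b
    have hd : (fun j : {j : Fin n // j ≠ i} => Function.update s i a j.1)
        = (fun j : {j : Fin n // j ≠ i} => Function.update s i b j.1) := by
      funext j
      simp [Function.update_of_ne j.2]
    rw [h i (Function.update s i a), h i (Function.update s i b), hd]
    ring
end

section
/- Given a system objective function φ : S → ℝ with structure vector v^φ ∈ ℝ^S defined by v^φ(x) = φ(x), there exist local information based utility functions c_i such that the resulting game is a potential game with potential function φ, if and only if for every player i the linear system T_i ξ = v^φ has a solution ξ ∈ ℝ^{(∏_{j∈N_i} S_j) ⊕ (∏_{j≠i} S_j)}. Moreover, if ξ_i = (ξ_i^1, ξ_i^2) is a solution for player i, then c_i(x) = ξ_i^1(x_{N_i}) defines such local information based utility functions. -/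
open Matrix

/-- The `W`-drawing matrix. -/
def drawing {n : ℕ} (S : Fin n → Type*) [∀ i, Fintype (S i)] [∀ i, DecidableEq (S i)]
    (W : Finset (Fin n)) :
    Matrix ((j : {j : Fin n // j ∈ W}) → S j.1) ((j : Fin n) → S j) ℝ :=
  fun u x => if (fun j : {j : Fin n // j ∈ W} => x j.1) = u then 1 else 0

/-- The utility design matrix `T_i = [Γ_{N_i}ᵀ, Γ_{N\{i}}ᵀ]`. -/
def Tmat {n : ℕ} (S : Fin n → Type*) [∀ i, Fintype (S i)] [∀ i, DecidableEq (S i)]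
    (U : Fin n → Finset (Fin n)) (i : Fin n) :
    Matrix ((j : Fin n) → S j)
      (((j : {j : Fin n // j ∈ insert i (U i)}) → S j.1) ⊕
        ((j : {j : Fin n // j ∈ Finset.univ.erase i}) → S j.1)) ℝ :=
  Matrix.fromCols (drawing S (insert i (U i)))ᵀ (drawing S (Finset.univ.erase i))ᵀ

/-- `Λ_i`. -/
def Lmat {n : ℕ} (S : Fin n → Type*) [∀ i, Fintype (S i)] [∀ i, DecidableEq (S i)]
    (U : Fin n → Finset (Fin n)) (i : Fin n) :
    Matrix ((j : {j : Fin n // j ∈ insert i (U i)}) → S j.1)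
      ((j : {j : Fin n // j ∈ U i}) → S j.1) ℝ :=
  fun x y =>
    if (fun j : {j : Fin n // j ∈ U i} => x ⟨j.1, Finset.mem_insert_of_mem j.2⟩) = y then 1 else 0

/-- `Υ_i`. -/
def Umat {n : ℕ} (S : Fin n → Type*) [∀ i, Fintype (S i)] [∀ i, DecidableEq (S i)]
    (U : Fin n → Finset (Fin n)) (hU : ∀ i, i ∉ U i) (i : Fin n) :
    Matrix ((j : {j : Fin n // j ∈ Finset.univ.erase i}) → S j.1)
      ((j : {j : Fin n // j ∈ U i}) → S j.1) ℝ :=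
  fun x y =>
    if (fun j : {j : Fin n // j ∈ U i} =>
        x ⟨j.1, Finset.mem_erase.mpr ⟨fun h => hU i (by simpa [h] using j.2), Finset.mem_univ _⟩⟩) = y
    then 1 else 0

/-- `H_i = [Λ_i; -Υ_i]`. -/
def Hmat {n : ℕ} (S : Fin n → Type*) [∀ i, Fintype (S i)] [∀ i, DecidableEq (S i)]
    (U : Fin n → Finset (Fin n)) (hU : ∀ i, i ∉ U i) (i : Fin n) :
    Matrix (((j : {j : Fin n // j ∈ insert i (U i)}) → S j.1) ⊕
        ((j : {j : Fin n // j ∈ Finset.univ.erase i}) → S j.1))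
      ((j : {j : Fin n // j ∈ U i}) → S j.1) ℝ :=
  Matrix.fromRows (Lmat S U i) (-(Umat S U hU i))

/-!
The equation `T_i ξ = v^φ` says `φ x = ξ¹ (x_{N_i}) + ξ² (x_{-i})` for every profile `x`, i.e. that
`φ` splits into a part depending only on `N_i` and a part not depending on `x_i`. The second
summand cancels in every unilateral deviation of player `i`, so `c_i = ξ¹ ∘ (·)_{N_i}` has the
same deviations as `φ`. Conversely, if a local `c_i` has the same deviations as `φ`, then `φ - c_i`
does not depend on `x_i`, and the two functions factor through the restrictions to `N_i` and
`N \ {i}`, giving the two blocks of a solution.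
-/

section DependsOn

variable {ι : Type*} {α : ι → Type*} {β : Type*}

theorem Finset.dependsOn_comp_restrict (s : Finset ι) (g : ((i : s) → α i) → β) :
    DependsOn (g ∘ s.restrict) s :=
  fun _ _ h => congrArg g (funext fun j => h j j.2)

theorem DependsOn.exists_eq_comp_restrict [Nonempty β] {f : ((i : ι) → α i) → β}
    {s : Finset ι} (hf : DependsOn f s) : ∃ g : ((i : s) → α i) → β, f = g ∘ s.restrict :=
  dependsOn_iff_exists_comp.mp hf

theorem dependsOn_compl_singleton_iff [DecidableEq ι] {f : ((i : ι) → α i) → β} {i : ι} :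
    DependsOn f {i}ᶜ ↔ ∀ (s : (j : ι) → α j) (a b : α i),
      f (Function.update s i a) = f (Function.update s i b) := by
  constructor
  · intro hf s a b
    exact hf fun j hj => by simp [Function.update_of_ne (Set.mem_compl_singleton_iff.mp hj)]
  · intro hf x y hxy
    have hy : Function.update x i (y i) = y := by
      funext j
      by_cases hj : j = i
      · subst hj; simp
      · simp [Function.update_of_ne hj, hxy j hj]
    rw [← Function.update_eq_self i x, ← hy, hf]

end DependsOn

section Potential

variable {ι : Type*} [DecidableEq ι] {α : ι → Type*} {β : Type*} [AddCommGroup β]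

def IsPotentialFor (φ f : ((j : ι) → α j) → β) (i : ι) : Prop :=
  ∀ (s : (j : ι) → α j) (a b : α i),
    f (Function.update s i a) - f (Function.update s i b) =
      φ (Function.update s i a) - φ (Function.update s i b)

theorem isPotentialFor_iff_dependsOn_sub {φ f : ((j : ι) → α j) → β} {i : ι} :
    IsPotentialFor φ f i ↔ DependsOn (φ - f) {i}ᶜ := by
  rw [dependsOn_compl_singleton_iff]
  refine forall₃_congr fun s a b => ?_
  exact eq_comm.trans sub_eq_sub_iff_sub_eq_sub

end Potential

section Drawing

variable {n : ℕ} {S : Fin n → Type*} [∀ i, Fintype (S i)] [∀ i, DecidableEq (S i)]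

theorem drawing_transpose_mulVec_apply (W : Finset (Fin n))
    (v : ((j : W) → S j) → ℝ) (x : (j : Fin n) → S j) :
    ((drawing S W)ᵀ *ᵥ v) x = v (W.restrict x) := by
  simp only [mulVec, dotProduct, transpose_apply, drawing, ite_mul, one_mul, zero_mul,
    Finset.sum_ite_eq, Finset.mem_univ, if_true, Finset.restrict_def]

theorem Tmat_mulVec_apply (U : Fin n → Finset (Fin n)) (i : Fin n)
    (ξ : (((j : ↥(insert i (U i))) → S j) ⊕ ((j : ↥(Finset.univ.erase i)) → S j)) → ℝ)
    (x : (j : Fin n) → S j) :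
    (Tmat S U i *ᵥ ξ) x =
      ξ (Sum.inl ((insert i (U i)).restrict x)) + ξ (Sum.inr ((Finset.univ.erase i).restrict x)) := by
  simp only [Tmat, fromCols_mulVec, Pi.add_apply, drawing_transpose_mulVec_apply,
    Function.comp_apply]

theorem isPotentialFor_of_Tmat_mulVec_eq {U : Fin n → Finset (Fin n)} {i : Fin n}
    {φ : ((j : Fin n) → S j) → ℝ}
    {ξ : (((j : ↥(insert i (U i))) → S j) ⊕ ((j : ↥(Finset.univ.erase i)) → S j)) → ℝ}
    (hξ : Tmat S U i *ᵥ ξ = φ) :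
    IsPotentialFor φ ((ξ ∘ Sum.inl) ∘ (insert i (U i)).restrict) i := by
  have hsplit : φ - (ξ ∘ Sum.inl) ∘ (insert i (U i)).restrict =
      (ξ ∘ Sum.inr) ∘ (Finset.univ.erase i).restrict := by
    funext x
    simp [← hξ, Tmat_mulVec_apply]
  rw [isPotentialFor_iff_dependsOn_sub, hsplit]
  simpa [Set.compl_eq_univ_sdiff] using (Finset.univ.erase i).dependsOn_comp_restrict (ξ ∘ Sum.inr)

theorem exists_Tmat_mulVec_eq_of_isPotentialFor {U : Fin n → Finset (Fin n)} {i : Fin n}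
    {φ c : ((j : Fin n) → S j) → ℝ} (hc : DependsOn c (insert i (U i) : Finset (Fin n)))
    (hφ : IsPotentialFor φ c i) :
    ∃ ξ, Tmat S U i *ᵥ ξ = φ := by
  obtain ⟨g₁, hg₁⟩ := hc.exists_eq_comp_restrict
  obtain ⟨g₂, hg₂⟩ := DependsOn.exists_eq_comp_restrict (s := Finset.univ.erase i)
    (by simpa [Set.compl_eq_univ_sdiff] using isPotentialFor_iff_dependsOn_sub.mp hφ)
  refine ⟨Sum.elim g₁ g₂, funext fun x => ?_⟩
  rw [Tmat_mulVec_apply, Sum.elim_inl, Sum.elim_inr]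
  have := congrFun hg₂ x
  simp only [Pi.sub_apply, Function.comp_apply, hg₁] at this ⊢
  linarith

end Drawing

theorem local_utility_design_iff_linear_system_general
    {n : ℕ} {S : Fin n → Type*} [∀ i, Fintype (S i)] [∀ i, DecidableEq (S i)]
    (U : Fin n → Finset (Fin n))
    (φ : ((j : Fin n) → S j) → ℝ) :
    ((∃ c : Fin n → ((j : Fin n) → S j) → ℝ,
        (∀ (i : Fin n) (x y : (j : Fin n) → S j),
            (∀ j ∈ insert i (U i), x j = y j) → c i x = c i y) ∧
        (∀ (i : Fin n) (s : (j : Fin n) → S j) (a b : S i),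
            c i (Function.update s i a) - c i (Function.update s i b) =
              φ (Function.update s i a) - φ (Function.update s i b))) ↔
      ∀ i : Fin n, ∃ ξ, Tmat S U i *ᵥ ξ = fun x => φ x) ∧
    (∀ ξ : (i : Fin n) →
        ((((j : {j : Fin n // j ∈ insert i (U i)}) → S j.1) ⊕
          ((j : {j : Fin n // j ∈ Finset.univ.erase i}) → S j.1)) → ℝ),
      (∀ i : Fin n, Tmat S U i *ᵥ ξ i = fun x => φ x) →
        ((∀ (i : Fin n) (x y : (j : Fin n) → S j),
            (∀ j ∈ insert i (U i), x j = y j) →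
              ξ i (Sum.inl fun j => x j.1) = ξ i (Sum.inl fun j => y j.1)) ∧
        (∀ (i : Fin n) (s : (j : Fin n) → S j) (a b : S i),
            ξ i (Sum.inl fun j => Function.update s i a j.1) -
                ξ i (Sum.inl fun j => Function.update s i b j.1) =
              φ (Function.update s i a) - φ (Function.update s i b)))) := by
  have hdesign : ∀ ξ : (i : Fin n) → _, (∀ i, Tmat S U i *ᵥ ξ i = φ) →
      (∀ i, DependsOn ((ξ i ∘ Sum.inl) ∘ (insert i (U i)).restrict) (insert i (U i) : Finset _)) ∧
        ∀ i, IsPotentialFor φ ((ξ i ∘ Sum.inl) ∘ (insert i (U i)).restrict) i :=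
    fun ξ hξ => ⟨fun i => Finset.dependsOn_comp_restrict _ _,
      fun i => isPotentialFor_of_Tmat_mulVec_eq (hξ i)⟩
  refine ⟨⟨fun ⟨c, hloc, hpot⟩ i => exists_Tmat_mulVec_eq_of_isPotentialFor (hloc i) (hpot i),
    fun hsol => ?_⟩, hdesign⟩
  choose ξ hξ using hsol
  exact ⟨_, hdesign ξ hξ⟩

/-- Given an objective function `φ` with structure vector
`v^φ = fun x => φ x`, there exist local information based utility functions making the game
a potential game with potential `φ` iff for every player `i` the linear system
`T_i ξ = v^φ` has a solution.  Moreover, if `ξ i = (ξ_i^1, ξ_i^2)` solves the system for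
every player `i`, then `c_i x = ξ_i^1 (x_{N_i})` defines such local information based
utility functions. -/
theorem local_utility_design_iff_linear_system
    {n : ℕ} {S : Fin n → Type*} [∀ i, Fintype (S i)] [∀ i, DecidableEq (S i)]
    [∀ i, Nonempty (S i)]
    (U : Fin n → Finset (Fin n)) (hU : ∀ i, i ∉ U i)
    (φ : ((j : Fin n) → S j) → ℝ) :
    ((∃ c : Fin n → ((j : Fin n) → S j) → ℝ,
        (∀ (i : Fin n) (x y : (j : Fin n) → S j),
            (∀ j ∈ insert i (U i), x j = y j) → c i x = c i y) ∧
        (∀ (i : Fin n) (s : (j : Fin n) → S j) (a b : S i),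
            c i (Function.update s i a) - c i (Function.update s i b) =
              φ (Function.update s i a) - φ (Function.update s i b))) ↔
      ∀ i : Fin n, ∃ ξ, Tmat S U i *ᵥ ξ = fun x => φ x) ∧
    (∀ ξ : (i : Fin n) →
        ((((j : {j : Fin n // j ∈ insert i (U i)}) → S j.1) ⊕
          ((j : {j : Fin n // j ∈ Finset.univ.erase i}) → S j.1)) → ℝ),
      (∀ i : Fin n, Tmat S U i *ᵥ ξ i = fun x => φ x) →
        ((∀ (i : Fin n) (x y : (j : Fin n) → S j),
            (∀ j ∈ insert i (U i), x j = y j) →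
              ξ i (Sum.inl fun j => x j.1) = ξ i (Sum.inl fun j => y j.1)) ∧
        (∀ (i : Fin n) (s : (j : Fin n) → S j) (a b : S i),
            ξ i (Sum.inl fun j => Function.update s i a j.1) -
                ξ i (Sum.inl fun j => Function.update s i b j.1) =
              φ (Function.update s i a) - φ (Function.update s i b)))) :=
  local_utility_design_iff_linear_system_general U φ
end

section
/- For every player i, the span of the rows of T_i equals the orthogonal complement (with respect to the standard inner product on ℝ^{(∏_{j∈N_i} S_j) ⊕ (∏_{j≠i} S_j)}) of the span of the columns of H_i. -/
open Matrix

/-! A row of `T_i` is `e_{x|N_i} + e_{x|N∖i}`, and both restrictions of `x` agree on `U(i)`,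
so every row is orthogonal to every column of `H_i`. Conversely, by passing to orthogonal
complements it suffices to put every `w = (f, g)` orthogonal to all rows into the column span of
`H_i`. Any `a` on `N_i` and `b` on `N∖i` that agree on `U(i)` glue to a profile `x`, so
`f a + g b = 0` whenever `a|U(i) = b|U(i)`; as both restrictions to `U(i)` are onto, this forces
`f a = c (a|U(i))` and `g b = -c (b|U(i))` for some `c`, i.e. `w = H_i c`. -/

namespace Finset

variable {ι : Type*} {π : ι → Type*} [∀ i, Nonempty (π i)] {s t u : Finset ι}

theorem restrict₂_surjective (hst : s ⊆ t) : Function.Surjective (restrict₂ (π := π) hst) := by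
  classical
  intro f
  refine ⟨fun j => if h : j.1 ∈ s then f ⟨j.1, h⟩ else Classical.arbitrary _, ?_⟩
  funext j
  simp [j.2]

theorem exists_restrict_eq_of_restrict₂_eq [DecidableEq ι] (hus : u ⊆ s) (hut : u ⊆ t)
    (hst : s ∩ t ⊆ u) {a : (i : s) → π i} {b : (i : t) → π i}
    (hab : restrict₂ hus a = restrict₂ hut b) :
    ∃ x : (i : ι) → π i, s.restrict x = a ∧ t.restrict x = b := by
  refine ⟨fun j => if h : j ∈ s then a ⟨j, h⟩ else if h' : j ∈ t then b ⟨j, h'⟩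
    else Classical.arbitrary _, ?_, ?_⟩
  · funext j
    simp [j.2]
  · funext ⟨j, hjt⟩
    by_cases hjs : j ∈ s
    · simpa [hjs] using congrFun hab ⟨j, hst (mem_inter.2 ⟨hjs, hjt⟩)⟩
    · simp [hjs, hjt]

end Finset

theorem exists_eq_comp_of_add_eq_zero {A B G M : Type*} [AddGroup M] {p : A → G} {q : B → G}
    (hp : p.Surjective) (hq : q.Surjective) {f : A → M} {g : B → M}
    (h : ∀ a b, p a = q b → f a + g b = 0) :
    ∃ c : G → M, (∀ a, f a = c (p a)) ∧ ∀ b, g b = -c (q b) := by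
  refine ⟨fun y => f (Function.surjInv hp y), fun a => ?_, fun b => ?_⟩
  · obtain ⟨b, hb⟩ := hq (p a)
    exact add_right_cancel ((h a b hb.symm).trans
      (h _ b ((Function.surjInv_eq hp _).trans hb.symm)).symm)
  · exact eq_neg_of_add_eq_zero_right (h _ b (Function.surjInv_eq hp _))

namespace Matrix

def graphMatrix {α β : Type*} [DecidableEq β] (f : α → β) : Matrix β α ℝ :=
  of fun b a => if f a = b then 1 else 0

section Pullback

variable {X A B G : Type*} [Fintype A] [Fintype B]
  [DecidableEq A] [DecidableEq B] [DecidableEq G] {α : X → A} {β : X → B} {p : A → G} {q : B → G}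

theorem inner_toLp_fromCols_graphMatrix (x : X) (w : EuclideanSpace ℝ (A ⊕ B)) :
    inner ℝ (WithLp.toLp 2 (fromCols (graphMatrix α)ᵀ (graphMatrix β)ᵀ x)) w =
      w (.inl (α x)) + w (.inr (β x)) := by
  simp [PiLp.inner_apply, Fintype.sum_sum_type, graphMatrix]

theorem inner_fromCols_graphMatrix_fromRows_graphMatrix (hcomm : ∀ x, p (α x) = q (β x))
    (x : X) (y : G) :
    inner ℝ (WithLp.toLp 2 (fromCols (graphMatrix α)ᵀ (graphMatrix β)ᵀ x))
      (WithLp.toLp 2 (fun r => fromRows (graphMatrix p)ᵀ (-(graphMatrix q)ᵀ) r y)) = 0 := by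
  rw [inner_toLp_fromCols_graphMatrix]
  simp [graphMatrix, hcomm]

theorem mem_span_fromRows_graphMatrix_of_mem_orthogonal
    [Fintype G] (hglue : ∀ a b, p a = q b → ∃ x, α x = a ∧ β x = b)
    (hp : p.Surjective) (hq : q.Surjective)
    {w : EuclideanSpace ℝ (A ⊕ B)}
    (hw : w ∈ (Submodule.span ℝ (Set.range fun x =>
      (WithLp.toLp 2 (fromCols (graphMatrix α)ᵀ (graphMatrix β)ᵀ x) :
        EuclideanSpace ℝ (A ⊕ B))))ᗮ) :
    w ∈ Submodule.span ℝ (Set.range fun y =>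
      (WithLp.toLp 2 (fun r => fromRows (graphMatrix p)ᵀ (-(graphMatrix q)ᵀ) r y) :
        EuclideanSpace ℝ (A ⊕ B))) := by
  have hpair : ∀ a b, p a = q b → w (.inl a) + w (.inr b) = 0 := by
    intro a b hab
    obtain ⟨x, rfl, rfl⟩ := hglue a b hab
    rw [← inner_toLp_fromCols_graphMatrix]
    exact Submodule.inner_right_of_mem_orthogonal
      (Submodule.subset_span (Set.mem_range_self x)) hw
  obtain ⟨c, hcA, hcB⟩ := exists_eq_comp_of_add_eq_zero hp hq hpair
  refine Submodule.mem_span_range_iff_exists_fun ℝ |>.2 ⟨c, ?_⟩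
  ext (a | b)
  · simp [graphMatrix, hcA]
  · simp [graphMatrix, hcB]

theorem span_fromCols_graphMatrix_eq_orthogonal_span_fromRows_graphMatrix [Fintype G]
    (hcomm : ∀ x, p (α x) = q (β x)) (hglue : ∀ a b, p a = q b → ∃ x, α x = a ∧ β x = b)
    (hp : p.Surjective) (hq : q.Surjective) :
    Submodule.span ℝ (Set.range fun x =>
      (WithLp.toLp 2 (fromCols (graphMatrix α)ᵀ (graphMatrix β)ᵀ x) :
        EuclideanSpace ℝ (A ⊕ B))) =
    (Submodule.span ℝ (Set.range fun y =>
      (WithLp.toLp 2 (fun r => fromRows (graphMatrix p)ᵀ (-(graphMatrix q)ᵀ) r y) :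
        EuclideanSpace ℝ (A ⊕ B))))ᗮ := by
  refine le_antisymm ?_ ?_
  · rw [← Submodule.isOrtho_iff_le, Submodule.isOrtho_span]
    rintro _ ⟨x, rfl⟩ _ ⟨y, rfl⟩
    exact inner_fromCols_graphMatrix_fromRows_graphMatrix hcomm x y
  · calc _ ≤ _ := Submodule.orthogonal_le fun w hw =>
          mem_span_fromRows_graphMatrix_of_mem_orthogonal hglue hp hq hw
      _ = _ := Submodule.orthogonal_orthogonal _

end Pullback
end Matrix

/-- For every player `i`, the span of the rows of `T_i` equals the
orthogonal complement (with respect to the standard inner product on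
`ℝ^{(∏_{j∈N_i} S_j) ⊕ (∏_{j≠i} S_j)}`) of the span of the columns of `H_i`. -/
theorem span_rows_Tmat_eq_orthogonal_span_cols_Hmat
    {n : ℕ} (S : Fin n → Type*) [∀ i, Fintype (S i)] [∀ i, DecidableEq (S i)]
    [∀ i, Nonempty (S i)]
    (U : Fin n → Finset (Fin n)) (hU : ∀ i, i ∉ U i) (i : Fin n) :
    Submodule.span ℝ
        (Set.range fun r : (j : Fin n) → S j =>
          ((WithLp.equiv 2 _).symm (Tmat S U i r) :
            EuclideanSpace ℝ
              (((j : {j : Fin n // j ∈ insert i (U i)}) → S j.1) ⊕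
                ((j : {j : Fin n // j ∈ Finset.univ.erase i}) → S j.1)))) =
      (Submodule.span ℝ
        (Set.range fun c : (j : {j : Fin n // j ∈ U i}) → S j.1 =>
          ((WithLp.equiv 2 _).symm (fun r => Hmat S U hU i r c) :
            EuclideanSpace ℝ
              (((j : {j : Fin n // j ∈ insert i (U i)}) → S j.1) ⊕
                ((j : {j : Fin n // j ∈ Finset.univ.erase i}) → S j.1)))))ᗮ := by
  have hUN : U i ⊆ Finset.univ.erase i := fun j hj =>
    Finset.mem_erase.2 ⟨fun h => hU i (h ▸ hj), Finset.mem_univ j⟩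
  have hNU : insert i (U i) ∩ Finset.univ.erase i ⊆ U i := fun j hj => by
    obtain ⟨hjN, hji⟩ := Finset.mem_inter.1 hj
    exact (Finset.mem_insert.1 hjN).resolve_left (Finset.ne_of_mem_erase hji)
  -- `drawing S W = graphMatrix W.restrict`, `Λ_i = (graphMatrix p)ᵀ`, `Υ_i = (graphMatrix q)ᵀ`
  exact Matrix.span_fromCols_graphMatrix_eq_orthogonal_span_fromRows_graphMatrix
    (α := (insert i (U i)).restrict) (β := (Finset.univ.erase i).restrict)
    (p := Finset.restrict₂ (Finset.subset_insert i (U i))) (q := Finset.restrict₂ hUN)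
    (fun _ => rfl) (fun _ _ => Finset.exists_restrict_eq_of_restrict₂_eq _ _ hNU)
    (Finset.restrict₂_surjective _) (Finset.restrict₂_surjective _)
end

section
/- Given a system objective function φ : S → ℝ with structure vector v^φ ∈ ℝ^S defined by v^φ(x) = φ(x), there exist local information based utility functions c_i such that the resulting game is a potential game with potential function φ, if and only if v^φ lies in the intersection over all players i of the column spans of the utility design matrices T_i. -/
/-!
The columns of `Γ_Wᵀ` are the indicator functions of the fibres of the restriction map to the
coordinates in `W`, so their span consists exactly of the functions depending only on those
coordinates. Hence `v^φ` lies in the column span of `T_i` iff `φ = g + h` with `g` depending only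
on `N_i` and `h` not depending on `x_i`. Given local utilities, take `g = c_i` and `h = φ - c_i`;
the potential identity says precisely that `φ - c_i` is unchanged by unilateral deviations of `i`.
Conversely `c_i := g_i` works, because `h_i` cancels in every unilateral difference.
-/

open Matrix

open Function

section FiberIndicators

variable {X Y R : Type*} [Fintype Y] [DecidableEq Y] [Semiring R]

lemma sum_smul_fiberIndicator (p : X → Y) (c : Y → R) :
    ∑ y, c y • (fun x => if p x = y then (1 : R) else 0) = c ∘ p := by
  ext x
  simp [Finset.sum_apply]

lemma mem_span_range_fiberIndicator_iff (p : X → Y) (f : X → R) :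
    f ∈ Submodule.span R (Set.range fun y x => if p x = y then (1 : R) else 0) ↔
      ∃ g : Y → R, f = g ∘ p := by
  rw [Submodule.mem_span_range_iff_exists_fun]
  simp only [sum_smul_fiberIndicator]
  exact exists_congr fun g => eq_comm

end FiberIndicators

section DependsOn

variable {ι R : Type*} [DecidableEq ι] {α : ι → Type*}

lemma DependsOn.apply_update_eq {f : (Π j, α j) → R} {i : ι} (hf : DependsOn f {i}ᶜ)
    (s : Π j, α j) (a b : α i) : f (Function.update s i a) = f (Function.update s i b) :=
  hf fun j hj => by rw [update_of_ne hj, update_of_ne hj]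

lemma dependsOn_compl_singleton_sub [AddCommGroup R] {c φ : (Π j, α j) → R} {i : ι}
    (h : ∀ (s : Π j, α j) (a b : α i),
      c (update s i a) - c (update s i b) = φ (update s i a) - φ (update s i b)) :
    DependsOn (φ - c) {i}ᶜ := by
  intro x y hxy
  have hy : update x i (y i) = y := by
    ext j
    rcases eq_or_ne j i with rfl | hj
    · simp
    · rw [update_of_ne hj, hxy j hj]
  have := h x (y i) (x i)
  rw [hy, update_eq_self] at this
  simp only [Pi.sub_apply]
  rw [sub_eq_sub_iff_sub_eq_sub, ← neg_sub, ← this, neg_sub]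

end DependsOn

section UtilityDesign

variable {n : ℕ} {S : Fin n → Type*} [∀ i, Fintype (S i)] [∀ i, DecidableEq (S i)]

lemma mem_span_range_drawing_iff (W : Finset (Fin n)) (f : (Π j, S j) → ℝ) :
    f ∈ Submodule.span ℝ (Set.range (drawing S W)) ↔ DependsOn f W :=
  (mem_span_range_fiberIndicator_iff W.restrict f).trans dependsOn_iff_exists_comp.symm

lemma mem_span_range_Tmat_transpose_iff (U : Fin n → Finset (Fin n)) (i : Fin n)
    (f : (Π j, S j) → ℝ) :
    f ∈ Submodule.span ℝ (Set.range (Tmat S U i)ᵀ) ↔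
      ∃ g, DependsOn g (insert i (U i) : Finset (Fin n)) ∧ ∃ h, DependsOn h {i}ᶜ ∧ g + h = f := by
  have hrange : Set.range (Tmat S U i)ᵀ =
      Set.range (drawing S (insert i (U i))) ∪ Set.range (drawing S (Finset.univ.erase i)) := by
    rw [Tmat, transpose_fromCols, transpose_transpose, transpose_transpose]
    exact Set.Sum.elim_range _ _
  rw [hrange, Submodule.span_union, Submodule.mem_sup]
  simp only [mem_span_range_drawing_iff, Finset.coe_erase, Finset.coe_univ,
    ← Set.compl_eq_univ_sdiff]

end UtilityDesign

theorem local_utility_design_iff_mem_inf_colSpan_general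
    {n : ℕ} {S : Fin n → Type*} [∀ i, Fintype (S i)] [∀ i, DecidableEq (S i)]
    (U : Fin n → Finset (Fin n))
    (φ : ((j : Fin n) → S j) → ℝ) :
    (∃ c : Fin n → ((j : Fin n) → S j) → ℝ,
        (∀ (i : Fin n) (x y : (j : Fin n) → S j),
            (∀ j ∈ insert i (U i), x j = y j) → c i x = c i y) ∧
        (∀ (i : Fin n) (s : (j : Fin n) → S j) (a b : S i),
            c i (Function.update s i a) - c i (Function.update s i b) =
              φ (Function.update s i a) - φ (Function.update s i b))) ↔
      (fun x => φ x) ∈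
        ⨅ i : Fin n, Submodule.span ℝ (Set.range (Tmat S U i)ᵀ) := by
  simp only [Submodule.mem_iInf, mem_span_range_Tmat_transpose_iff]
  constructor
  · rintro ⟨c, hloc, hpot⟩ i
    exact ⟨c i, hloc i, φ - c i, dependsOn_compl_singleton_sub (hpot i), add_sub_cancel _ _⟩
  · intro hdesign
    choose g hg h hh hgh using hdesign
    have hφ : ∀ i, g i + h i = φ := hgh
    refine ⟨g, hg, fun i s a b => ?_⟩
    rw [← hφ i, Pi.add_apply, Pi.add_apply, (hh i).apply_update_eq s a b]
    abel

/-- There exist local information based utility functions making the game a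
potential game with potential function `φ` iff the structure vector `v^φ = fun x => φ x`
lies in the intersection over all players `i` of the column spans of the utility design
matrices `T_i`. -/
theorem local_utility_design_iff_mem_inf_colSpan
    {n : ℕ} {S : Fin n → Type*} [∀ i, Fintype (S i)] [∀ i, DecidableEq (S i)]
    [∀ i, Nonempty (S i)]
    (U : Fin n → Finset (Fin n)) (hU : ∀ i, i ∉ U i)
    (φ : ((j : Fin n) → S j) → ℝ) :
    (∃ c : Fin n → ((j : Fin n) → S j) → ℝ,
        (∀ (i : Fin n) (x y : (j : Fin n) → S j),
            (∀ j ∈ insert i (U i), x j = y j) → c i x = c i y) ∧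
        (∀ (i : Fin n) (s : (j : Fin n) → S j) (a b : S i),
            c i (Function.update s i a) - c i (Function.update s i b) =
              φ (Function.update s i a) - φ (Function.update s i b))) ↔
      (fun x => φ x) ∈
        ⨅ i : Fin n, Submodule.span ℝ (Set.range (Tmat S U i)ᵀ) :=
  local_utility_design_iff_mem_inf_colSpan_general U φ
end

section
/- For every player i and every vector v ∈ ℝ^S, the linear system T_i ξ = v has a solution if and only if the rank of the augmented matrix [T_i, v] equals k_{N_i} + k_{-i} - k_{U(i)}, where k_{N_i} = ∏_{j∈N_i} |S_j|, k_{-i} = ∏_{j≠i} |S_j|, and k_{U(i)} = ∏_{j∈U(i)} |S_j|. -/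
/-!
The column space of `T_i` is the sum of the spaces of functions on `S` that depend only on the
coordinates in `N_i`, resp. in `N \ {i}`. Functions depending only on the coordinates in `W` form
a space of dimension `k_W` (the map `c ↦ c ∘ restrict_W` is injective), and a function depending
only on the coordinates in `W₁` and only on those in `W₂` depends only on those in `W₁ ∩ W₂`.
Since `N_i ∩ (N \ {i}) = U(i)`, Grassmann's formula gives `rank T_i = k_{N_i} + k_{-i} - k_{U(i)}`,
and `T_i ξ = v` is solvable iff `v` lies in the column space, i.e. iff appending `v` does not
raise the rank.
-/

open Matrix

theorem Submodule.mem_iff_finrank_sup_span_singleton {K M : Type*} [DivisionRing K]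
    [AddCommGroup M] [Module K M] (V : Submodule K M) [FiniteDimensional K V] (v : M) :
    v ∈ V ↔ Module.finrank K ↥(V ⊔ span K {v}) = Module.finrank K V := by
  refine ⟨fun hv => by rw [sup_eq_left.mpr ((span_singleton_le_iff_mem v V).mpr hv)], ?_⟩
  intro h
  by_contra hv
  have hlt : V < V ⊔ span K {v} :=
    SetLike.lt_iff_le_and_exists.mpr
      ⟨le_sup_left, v, mem_sup_right (mem_span_singleton_self v), hv⟩
  exact (Submodule.finrank_lt_finrank_of_lt hlt).ne' h

namespace Matrix

variable {K m p q : Type*} [Fintype p]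

theorem range_mulVecLin_fromCols [CommSemiring K] [Fintype q] (A : Matrix m p K)
    (B : Matrix m q K) :
    LinearMap.range (fromCols A B).mulVecLin =
      LinearMap.range A.mulVecLin ⊔ LinearMap.range B.mulVecLin := by
  ext w
  simp only [LinearMap.mem_range, Submodule.mem_sup, mulVecLin_apply]
  constructor
  · rintro ⟨ξ, rfl⟩
    exact ⟨_, ⟨ξ ∘ Sum.inl, rfl⟩, _, ⟨ξ ∘ Sum.inr, rfl⟩, (fromCols_mulVec A B ξ).symm⟩
  · rintro ⟨_, ⟨ξ, rfl⟩, _, ⟨η, rfl⟩, rfl⟩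
    exact ⟨Sum.elim ξ η, fromCols_mulVec_sumElim A B ξ η⟩

theorem range_mulVecLin_replicateCol_unit [CommSemiring K] (v : m → K) :
    LinearMap.range (replicateCol Unit v).mulVecLin = Submodule.span K {v} := by
  have hmul (c : Unit → K) : replicateCol Unit v *ᵥ c = c () • v := by
    ext r
    simp [mulVec, dotProduct, mul_comm]
  ext w
  simp only [LinearMap.mem_range, Submodule.mem_span_singleton, mulVecLin_apply, hmul]
  exact ⟨fun ⟨c, hc⟩ => ⟨c (), hc⟩, fun ⟨a, ha⟩ => ⟨fun _ => a, ha⟩⟩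

theorem exists_mulVec_eq_iff_rank_fromCols_replicateCol [Field K] (A : Matrix m p K)
    (v : m → K) :
    (∃ ξ, A *ᵥ ξ = v) ↔ (fromCols A (replicateCol Unit v)).rank = A.rank := by
  rw [rank, rank, range_mulVecLin_fromCols, range_mulVecLin_replicateCol_unit,
    ← Submodule.mem_iff_finrank_sup_span_singleton]
  simp only [LinearMap.mem_range, mulVecLin_apply]

end Matrix

theorem DependsOn.inter {ι β : Type*} {α : ι → Type*} {f : (Π i, α i) → β} {s t : Set ι}
    (hs : DependsOn f s) (ht : DependsOn f t) : DependsOn f (s ∩ t) := by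
  classical
  intro x y hxy
  calc f x = f (s.piecewise x y) := hs fun i hi => (s.piecewise_eq_of_mem x y hi).symm
    _ = f y := ht fun i hi => by
      by_cases his : i ∈ s
      · rw [s.piecewise_eq_of_mem x y his, hxy i ⟨his, hi⟩]
      · exact s.piecewise_eq_of_notMem x y his

section DependsOnSubmodule

variable {ι : Type*} (R : Type*) (α : ι → Type*) [Semiring R]

def dependsOnSubmodule (s : Set ι) : Submodule R ((Π i, α i) → R) where
  carrier := {f | DependsOn f s}
  add_mem' hf hg _ _ h := by simp only [Pi.add_apply, hf h, hg h]
  zero_mem' _ _ _ := rfl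
  smul_mem' c _ hf _ _ h := by simp only [Pi.smul_apply, hf h]

variable {R α}

@[simp]
theorem mem_dependsOnSubmodule {s : Set ι} {f : (Π i, α i) → R} :
    f ∈ dependsOnSubmodule R α s ↔ DependsOn f s :=
  Iff.rfl

variable (R α)

theorem dependsOnSubmodule_inter (s t : Set ι) :
    dependsOnSubmodule R α (s ∩ t) = dependsOnSubmodule R α s ⊓ dependsOnSubmodule R α t := by
  ext f
  simp only [Submodule.mem_inf, mem_dependsOnSubmodule]
  exact ⟨fun hf => ⟨hf.mono Set.inter_subset_left, hf.mono Set.inter_subset_right⟩,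
    fun ⟨hs, ht⟩ => hs.inter ht⟩

end DependsOnSubmodule

section Drawing

variable {n : ℕ} (S : Fin n → Type*) [∀ i, Fintype (S i)] [∀ i, DecidableEq (S i)]

theorem drawing_transpose_mulVec (W : Finset (Fin n))
    (c : ((j : {j : Fin n // j ∈ W}) → S j.1) → ℝ) :
    (drawing S W)ᵀ *ᵥ c = c ∘ Subtype.restrict (· ∈ W) := by
  ext x
  simp only [mulVec, dotProduct, transpose_apply, drawing, ite_mul, one_mul, zero_mul,
    Finset.sum_ite_eq, Finset.mem_univ, if_true, Function.comp_apply]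
  rfl

variable [∀ i, Nonempty (S i)]

theorem drawing_transpose_mulVec_injective (W : Finset (Fin n)) :
    Function.Injective ((drawing S W)ᵀ *ᵥ ·) := by
  intro c c' h
  simp only [drawing_transpose_mulVec] at h
  exact (Subtype.surjective_restrict _).injective_comp_right h

theorem range_drawing_transpose (W : Finset (Fin n)) :
    LinearMap.range (drawing S W)ᵀ.mulVecLin = dependsOnSubmodule ℝ S ↑W := by
  ext f
  simp only [LinearMap.mem_range, mulVecLin_apply, drawing_transpose_mulVec,
    mem_dependsOnSubmodule]
  constructor
  · rintro ⟨c, rfl⟩ x y hxy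
    exact congrArg c (funext fun j => hxy j j.2)
  · intro hf
    have hsurj := Subtype.surjective_restrict (β := S) (· ∈ W)
    refine ⟨f ∘ Function.surjInv hsurj, funext fun x => hf fun j hj => ?_⟩
    exact congrFun (Function.surjInv_eq hsurj (Subtype.restrict _ x)) ⟨j, hj⟩

theorem finrank_dependsOnSubmodule (W : Finset (Fin n)) :
    Module.finrank ℝ (dependsOnSubmodule ℝ S ↑W) = ∏ j ∈ W, Fintype.card (S j) := by
  rw [← range_drawing_transpose, LinearMap.finrank_range_of_inj
    (drawing_transpose_mulVec_injective S W), Module.finrank_fintype_fun_eq_card,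
    Fintype.card_pi, Finset.prod_coe_sort W fun j => Fintype.card (S j)]

end Drawing

section Tmat

variable {n : ℕ} (S : Fin n → Type*) [∀ i, Fintype (S i)] [∀ i, DecidableEq (S i)]
  [∀ i, Nonempty (S i)] (U : Fin n → Finset (Fin n)) (i : Fin n)

theorem range_Tmat :
    LinearMap.range (Tmat S U i).mulVecLin =
      dependsOnSubmodule ℝ S ↑(insert i (U i)) ⊔
        dependsOnSubmodule ℝ S ↑(Finset.univ.erase i) := by
  rw [Tmat, range_mulVecLin_fromCols, range_drawing_transpose, range_drawing_transpose]

theorem rank_Tmat_add_prod (hi : i ∉ U i) :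
    (Tmat S U i).rank + ∏ j ∈ U i, Fintype.card (S j) =
      (∏ j ∈ insert i (U i), Fintype.card (S j)) +
        ∏ j ∈ Finset.univ.erase i, Fintype.card (S j) := by
  have hinter : insert i (U i) ∩ Finset.univ.erase i = U i := by
    rw [Finset.insert_inter_of_notMem (Finset.notMem_erase i _),
      Finset.inter_eq_left.mpr fun j hj =>
        Finset.mem_erase.mpr ⟨ne_of_mem_of_not_mem hj hi, Finset.mem_univ j⟩]
  rw [← finrank_dependsOnSubmodule S (insert i (U i)),
    ← finrank_dependsOnSubmodule S (Finset.univ.erase i),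
    ← Submodule.finrank_sup_add_finrank_inf_eq, ← dependsOnSubmodule_inter, ← Finset.coe_inter,
    hinter, finrank_dependsOnSubmodule, rank, range_Tmat]

end Tmat

/-- For every player `i` and every vector `v ∈ ℝ^S`, the linear system
`T_i ξ = v` has a solution iff the rank of the augmented matrix `[T_i, v]` equals
`k_{N_i} + k_{-i} - k_{U(i)}`, where `k_W = ∏_{j ∈ W} |S_j|`. -/
theorem solvable_iff_rank_augmented
    {n : ℕ} (S : Fin n → Type*) [∀ i, Fintype (S i)] [∀ i, DecidableEq (S i)]
    [∀ i, Nonempty (S i)]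
    (U : Fin n → Finset (Fin n)) (hU : ∀ i, i ∉ U i) (i : Fin n)
    (v : ((j : Fin n) → S j) → ℝ) :
    (∃ ξ, Tmat S U i *ᵥ ξ = v) ↔
      (Matrix.fromCols (Tmat S U i) (fun r (_ : Unit) => v r)).rank =
        (∏ j ∈ insert i (U i), Fintype.card (S j)) +
          (∏ j ∈ Finset.univ.erase i, Fintype.card (S j)) -
          ∏ j ∈ U i, Fintype.card (S j) := by
  change _ ↔ (fromCols (Tmat S U i) (replicateCol Unit v)).rank = _
  rw [exists_mulVec_eq_iff_rank_fromCols_replicateCol]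
  have hrank := rank_Tmat_add_prod S U i (hU i)
  omega
end

section
/- Let G be a potential game with potential function P and let β ≥ 0. The logit learning transition kernel satisfies detailed balance with respect to the Gibbs distribution μ^β: for all profiles x, y ∈ S, μ^β(x) K(x, y) = μ^β(y) K(y, x). -/
/-- The Gibbs distribution `μ^β(x) = exp(βP(x)) / Σ_y exp(βP(y))`. -/
noncomputable def gibbs {X : Type*} [Fintype X] (β : ℝ) (P : X → ℝ) (x : X) : ℝ :=
  Real.exp (β * P x) / ∑ y, Real.exp (β * P y)

/-- The logit learning transition kernel: `logitKernel β c y x` is the probability of moving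
from profile `y` to profile `x`, namely
`(1/n) Σ_{i : x^{-i} = y^{-i}} exp(β c_i(x)) / Σ_{z ∈ S_i} exp(β c_i(z, y^{-i}))`. -/
noncomputable def logitKernel {n : ℕ} {S : Fin n → Type*} [∀ i, Fintype (S i)]
    [∀ i, DecidableEq (S i)] (β : ℝ) (c : Fin n → ((j : Fin n) → S j) → ℝ)
    (y x : (j : Fin n) → S j) : ℝ :=
  (1 / (n : ℝ)) *
    ∑ i ∈ Finset.univ.filter (fun i : Fin n => ∀ j, j ≠ i → x j = y j),
      Real.exp (β * c i x) / ∑ z : S i, Real.exp (β * c i (Function.update y i z))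

/-- For a potential game with potential function `P` and `β ≥ 0`, the
logit learning transition kernel satisfies detailed balance with respect to the Gibbs
distribution `μ^β`: for all profiles `x, y`, `μ^β(x) K(x,y) = μ^β(y) K(y,x)`. -/
theorem logit_detailed_balance
    {n : ℕ} {S : Fin n → Type*} [∀ i, Fintype (S i)] [∀ i, DecidableEq (S i)]
    [∀ i, Nonempty (S i)]
    (c : Fin n → ((j : Fin n) → S j) → ℝ) (P : ((j : Fin n) → S j) → ℝ)
    (hpot : ∀ (i : Fin n) (s : (j : Fin n) → S j) (a b : S i),
        c i (Function.update s i a) - c i (Function.update s i b) =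
          P (Function.update s i a) - P (Function.update s i b))
    (β : ℝ) (hβ : 0 ≤ β) :
    ∀ x y : (j : Fin n) → S j,
      gibbs β P x * logitKernel β c x y = gibbs β P y * logitKernel β c y x := by
  intro x y
  rw [mul_comm, mul_comm (gibbs β P y) _]
  unfold gibbs logitKernel
  rw [mul_assoc, mul_assoc]
  congr 1
  rw [Finset.sum_mul, Finset.sum_mul]
  have hset : Finset.univ.filter (fun i : Fin n => ∀ j, j ≠ i → y j = x j)
      = Finset.univ.filter (fun i : Fin n => ∀ j, j ≠ i → x j = y j) := by
    apply Finset.filter_congr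
    intro i _
    constructor
    · intro h j hj; exact (h j hj).symm
    · intro h j hj; exact (h j hj).symm
  rw [hset]
  apply Finset.sum_congr rfl
  intro i hi
  simp only [Finset.mem_filter] at hi
  have hagree : ∀ j, j ≠ i → x j = y j := hi.2
  have hupd : ∀ z : S i, Function.update x i z = Function.update y i z := by
    intro z
    funext j
    by_cases hj : j = i
    · subst hj; simp
    · simp [Function.update_of_ne hj, hagree j hj]
  have hxy : Function.update x i (y i) = y := by
    funext j
    by_cases hj : j = i
    · subst hj; simp
    · simp [Function.update_of_ne hj, hagree j hj]
  have hxx : Function.update x i (x i) = x := Function.update_eq_self i x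
  have hkey : c i y - c i x = P y - P x := by
    have := hpot i x (y i) (x i)
    rwa [hxy, hxx] at this
  have hden : (∑ z : S i, Real.exp (β * c i (Function.update x i z)))
      = ∑ z : S i, Real.exp (β * c i (Function.update y i z)) := by
    apply Finset.sum_congr rfl
    intro z _
    rw [hupd z]
  rw [hden, div_mul_div_comm, div_mul_div_comm]
  congr 1
  rw [← Real.exp_add, ← Real.exp_add]
  congr 1
  nlinarith [hkey]
end

section
/- Let S be a nonempty finite set, P : S → ℝ, and for β ≥ 0 define μ^β(x) = exp(βP(x)) / Σ_{y∈S} exp(βP(y)). Then for every x ∈ S the limit of μ^β(x) as β → ∞ exists and equals 1/|argmax P| if x maximizes P and equals 0 otherwise; in particular, lim_{β→∞} μ^β(x) > 0 if and only if x is a maximizer of P. Hence the set of stochastically stable states equals the set of maximizers of P. -/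
/-!
Shifting every exponent by the maximum value `M` of `f` does not change the ratio, and after the
shift `exp (β * (f y - M))` tends to `1` at the maximizers and to `0` elsewhere. Hence the
partition function tends to the number of maximizers, and the Gibbs weight of `x` tends to
`1 / #argmax f` or `0`.
-/

open scoped Classical

open Filter Topology Real Finset

lemma tendsto_exp_mul_of_neg {c : ℝ} (hc : c < 0) :
    Tendsto (fun β : ℝ => exp (β * c)) atTop (𝓝 0) :=
  tendsto_exp_atBot.comp (tendsto_id.atTop_mul_const_of_neg hc)

lemma tendsto_exp_mul_sub_of_le {a M : ℝ} (h : a ≤ M) :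
    Tendsto (fun β : ℝ => exp (β * (a - M))) atTop (𝓝 (if a = M then 1 else 0)) := by
  by_cases ha : a = M
  · simp [ha]
  · rw [if_neg ha]
    exact tendsto_exp_mul_of_neg (sub_neg.2 (h.lt_of_ne ha))

section Gibbs

variable {ι : Type*} [Fintype ι]

lemma exp_mul_div_sum_exp_mul_eq_sub (f : ι → ℝ) (M β : ℝ) (x : ι) :
    exp (β * f x) / ∑ y, exp (β * f y) = exp (β * (f x - M)) / ∑ y, exp (β * (f y - M)) := by
  have hshift : ∀ z, exp (β * f z) = exp (β * M) * exp (β * (f z - M)) := fun z => by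
    rw [← exp_add]; ring_nf
  simp_rw [hshift, ← mul_sum]
  exact mul_div_mul_left _ _ (exp_ne_zero _)

lemma tendsto_sum_exp_mul_sub_of_le {f : ι → ℝ} {M : ℝ} (hM : ∀ y, f y ≤ M) :
    Tendsto (fun β : ℝ => ∑ y, exp (β * (f y - M))) atTop (𝓝 (#{y | f y = M} : ℝ)) := by
  rw [natCast_card_filter]
  exact tendsto_finsetSum _ fun y _ => tendsto_exp_mul_sub_of_le (hM y)

theorem tendsto_gibbs_of_isMax {f : ι → ℝ} {x₀ : ι} (hx₀ : ∀ y, f y ≤ f x₀) (x : ι) :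
    Tendsto (fun β : ℝ => exp (β * f x) / ∑ y, exp (β * f y)) atTop
      (𝓝 ((if f x = f x₀ then 1 else 0) / #{y | f y = f x₀})) := by
  have hcard : (#{y | f y = f x₀} : ℝ) ≠ 0 :=
    Nat.cast_ne_zero.2 (card_ne_zero_of_mem (mem_filter.2 ⟨mem_univ x₀, rfl⟩))
  simp_rw [exp_mul_div_sum_exp_mul_eq_sub f (f x₀)]
  exact (tendsto_exp_mul_sub_of_le (hx₀ x)).div (tendsto_sum_exp_mul_sub_of_le hx₀) hcard

end Gibbs

/-- Let `S` be a nonempty finite set, `P : S → ℝ`, and for `β ≥ 0` let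
`μ^β(x) = exp(βP(x)) / Σ_y exp(βP(y))`.  Then for every `x ∈ S` the limit of `μ^β(x)` as
`β → ∞` exists and equals `1 / |argmax P|` if `x` maximizes `P`, and `0` otherwise; in
particular `lim_{β→∞} μ^β(x) > 0` iff `x` is a maximizer of `P`.  Hence the set of
stochastically stable states (those `x` with `lim_{β→∞} μ^β(x) > 0`) equals the set of
maximizers of `P`. -/
theorem gibbs_limit_uniform_on_argmax
    {S : Type*} [Fintype S] [Nonempty S] (P : S → ℝ) :
    (∀ x : S,
      Filter.Tendsto (fun β : ℝ => Real.exp (β * P x) / ∑ y, Real.exp (β * P y))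
        Filter.atTop
        (nhds (if ∀ y, P y ≤ P x then
            (1 : ℝ) / (Finset.univ.filter fun z : S => ∀ y, P y ≤ P z).card
          else 0))) ∧
    (∀ x : S,
      ((∀ y, P y ≤ P x) ↔
        0 < (if ∀ y, P y ≤ P x then
            (1 : ℝ) / (Finset.univ.filter fun z : S => ∀ y, P y ≤ P z).card
          else 0))) ∧
    ({x : S | ∃ L : ℝ, 0 < L ∧
        Filter.Tendsto (fun β : ℝ => Real.exp (β * P x) / ∑ y, Real.exp (β * P y))
          Filter.atTop (nhds L)} =
      {x : S | ∀ y, P y ≤ P x}) := by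
  obtain ⟨x₀, hx₀⟩ := Finite.exists_max P
  have hmax_iff : ∀ x, (∀ y, P y ≤ P x) ↔ P x = P x₀ := fun x =>
    ⟨fun h => le_antisymm (hx₀ x) (h x₀), fun h y => h ▸ hx₀ y⟩
  have hcard : (0 : ℝ) < #{z | ∀ y, P y ≤ P z} :=
    Nat.cast_pos.2 (card_pos.2 ⟨x₀, mem_filter.2 ⟨mem_univ x₀, hx₀⟩⟩)
  have hlim : ∀ x, Tendsto (fun β : ℝ => exp (β * P x) / ∑ y, exp (β * P y)) atTop
      (𝓝 (if ∀ y, P y ≤ P x then (1 : ℝ) / #{z | ∀ y, P y ≤ P z} else 0)) := fun x => by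
    convert tendsto_gibbs_of_isMax hx₀ x using 2
    simp only [hmax_iff]
    split_ifs <;> simp
  have hpos : ∀ x, (∀ y, P y ≤ P x) ↔
      0 < (if ∀ y, P y ≤ P x then (1 : ℝ) / #{z | ∀ y, P y ≤ P z} else 0) := fun x => by
    split_ifs with h <;> simp [h, hcard]
  refine ⟨hlim, hpos, Set.ext fun x => ⟨?_, fun h => ⟨_, (hpos x).1 h, hlim x⟩⟩⟩
  rintro ⟨L, hL, hT⟩
  exact (hpos x).2 (tendsto_nhds_unique hT (hlim x) ▸ hL)
end

section
/- Let G be a potential game with potential function P, let β ≥ 0, and for each player i let R_i : S_i → Set(S_i) be restricted strategy sets satisfying reversibility (x_i ∈ R_i(y_i) ⇔ y_i ∈ R_i(x_i) for all x_i, y_i ∈ S_i) with x_i ∈ R_i(x_i), and let w_i = max_{x_i∈S_i} |R_i(x_i)|. Then the binary restrictive logit learning kernel satisfies detailed balance with respect to the Gibbs distribution: for any two profiles x, y ∈ S that differ in exactly one coordinate i with y_i ∈ R_i(x_i), μ^β(x) K(x, y) = μ^β(y) K(y, x), where K(x, y) = (1/n) (1/w_i) exp(β c_i(y)) / (exp(β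 c_i(y)) + exp(β c_i(x))) and μ^β(x) = exp(βP(x)) / Σ_{z∈S} exp(βP(z)). -/
/-- Let `G` be a potential game with potential function `P`, let `β ≥ 0`,
and for each player `i` let `R i : S i → Finset (S i)` be restricted strategy sets satisfying
reversibility (`a ∈ R i b ↔ b ∈ R i a`) and `a ∈ R i a`, with `w i = max_{a ∈ S i} |R i a|`.
Then the binary restrictive logit learning kernel satisfies detailed balance with respect to
the Gibbs distribution: for any two profiles `x, y` that differ in exactly one coordinate `i`
with `y i ∈ R i (x i)`,
`μ^β(x) K(x,y) = μ^β(y) K(y,x)`, where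
`K(x,y) = (1/n)(1/w_i) exp(β c_i(y)) / (exp(β c_i(y)) + exp(β c_i(x)))` and
`μ^β(x) = exp(βP(x)) / Σ_z exp(βP(z))`. -/
theorem binary_restrictive_logit_detailed_balance
    {n : ℕ} {S : Fin n → Type*} [∀ i, Fintype (S i)] [∀ i, DecidableEq (S i)]
    [∀ i, Nonempty (S i)]
    (c : Fin n → ((j : Fin n) → S j) → ℝ) (P : ((j : Fin n) → S j) → ℝ)
    (hpot : ∀ (i : Fin n) (s : (j : Fin n) → S j) (a b : S i),
        c i (Function.update s i a) - c i (Function.update s i b) =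
          P (Function.update s i a) - P (Function.update s i b))
    (β : ℝ) (hβ : 0 ≤ β)
    (R : (i : Fin n) → S i → Finset (S i))
    (hrev : ∀ (i : Fin n) (a b : S i), a ∈ R i b ↔ b ∈ R i a)
    (hrefl : ∀ (i : Fin n) (a : S i), a ∈ R i a) :
    ∀ (x y : (j : Fin n) → S j) (i : Fin n),
      (∀ j, j ≠ i → x j = y j) → x i ≠ y i → y i ∈ R i (x i) →
        (Real.exp (β * P x) / ∑ z : (j : Fin n) → S j, Real.exp (β * P z)) *
            ((1 / (n : ℝ)) * (1 / ((Finset.univ.sup fun a : S i => (R i a).card : ℕ) : ℝ)) *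
              (Real.exp (β * c i y) / (Real.exp (β * c i y) + Real.exp (β * c i x)))) =
          (Real.exp (β * P y) / ∑ z : (j : Fin n) → S j, Real.exp (β * P z)) *
            ((1 / (n : ℝ)) * (1 / ((Finset.univ.sup fun a : S i => (R i a).card : ℕ) : ℝ)) *
              (Real.exp (β * c i x) / (Real.exp (β * c i x) + Real.exp (β * c i y)))) := by
  intro x y i hoff hne _
  have hx : Function.update x i (x i) = x := Function.update_eq_self i x
  have hy : Function.update x i (y i) = y := by
    funext j
    rcases eq_or_ne j i with rfl | hj
    · simp
    · simp [Function.update_of_ne hj, hoff j hj]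
  have key : c i x - c i y = P x - P y := by
    have := hpot i x (x i) (y i)
    rwa [hx, hy] at this
  have hexp : Real.exp (β * P x) * Real.exp (β * c i y)
      = Real.exp (β * P y) * Real.exp (β * c i x) := by
    rw [← Real.exp_add, ← Real.exp_add]
    congr 1
    nlinarith [key]
  have hden : Real.exp (β * c i y) + Real.exp (β * c i x)
      = Real.exp (β * c i x) + Real.exp (β * c i y) := add_comm _ _
  rw [hden]
  set Z := ∑ z : (j : Fin n) → S j, Real.exp (β * P z)
  set C := (1 / (n : ℝ)) * (1 / ((Finset.univ.sup fun a : S i => (R i a).card : ℕ) : ℝ))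
  set D := Real.exp (β * c i x) + Real.exp (β * c i y)
  calc Real.exp (β * P x) / Z * (C * (Real.exp (β * c i y) / D))
      = (Real.exp (β * P x) * Real.exp (β * c i y)) * (C * Z⁻¹ * D⁻¹) := by ring
    _ = (Real.exp (β * P y) * Real.exp (β * c i x)) * (C * Z⁻¹ * D⁻¹) := by rw [hexp]
    _ = Real.exp (β * P y) / Z * (C * (Real.exp (β * c i x) / D)) := by ring
end
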